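/- arXiv:2104.00260 — 2 statements merged into one kernel-verified Lean document; each statement's English description precedes it below -/
import Mathlib

section
/- Let n ≥ 2, let S(t) := G(t) [G(t)/t]^{−1/n} for t > 0, and set E(t) := S(tⁿ). Then E is differentiable on (0,∞) and 2n − 1 ≤ t E′(t) / E(t) ≤ (n−1)(s_g + 1) + 1 for all t > 0; in particular ∫₀ᵗ E(s)/s ds is comparable to E(t) up to constants depending only on n and s_g. -/
open MeasureTheory Real

noncomputable section

lemma aux_key (ig sg : ℝ) (hig : 1 ≤ ig) (higsg : ig ≤ sg) (g g' : ℝ → ℝ)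
    (hg : ∀ t, 0 < t → 0 < g t) (hg0 : g 0 = 0)
    (hgd : ∀ t, 0 < t → HasDerivAt g (g' t) t)
    (hgl : ∀ t, 0 < t → ig ≤ t * g' t / g t)
    (hgu : ∀ t, 0 < t → t * g' t / g t ≤ sg)
    (G : ℝ → ℝ) (hG : ∀ t, G t = ∫ τ in (0:ℝ)..t, g τ) :
    (∀ t, 0 < t → HasDerivAt G (g t) t) ∧ (∀ t, 0 < t → 0 < G t) ∧
    MonotoneOn G (Set.Ici 0) ∧
    (∀ τ, 0 < τ → (1+ig) * G τ ≤ τ * g τ ∧ τ * g τ ≤ (1+sg) * G τ) := by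
  -- g' positive on (0,∞)
  have hg'pos : ∀ t, 0 < t → 0 < g' t := by
    intro t ht
    have h1 := hgl t ht
    have h2 : (0:ℝ) < t * g' t / g t := lt_of_lt_of_le (by linarith) h1
    have h3 : 0 < t * g' t := by
      by_contra hc
      push_neg at hc
      have : t * g' t / g t ≤ 0 := div_nonpos_of_nonpos_of_nonneg hc (hg t ht).le
      linarith
    nlinarith [mul_pos_iff.mp h3]
  have hgc : ContinuousOn g (Set.Ioi (0:ℝ)) := fun x hx =>
    (hgd x hx).continuousAt.continuousWithinAt
  -- g nonneg on [0,∞)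
  have hgnn : ∀ x : ℝ, 0 ≤ x → 0 ≤ g x := by
    intro x hx
    rcases hx.eq_or_lt with h | h
    · rw [← h, hg0]
    · exact (hg x h).le
  -- g monotone on [0,∞)
  have gmonoI : MonotoneOn g (Set.Ioi (0:ℝ)) := by
    apply monotoneOn_of_deriv_nonneg (convex_Ioi 0) hgc
    · intro x hx
      rw [interior_Ioi] at hx
      exact (hgd x hx).differentiableAt.differentiableWithinAt
    · intro x hx
      rw [interior_Ioi] at hx
      rw [(hgd x hx).deriv]
      exact (hg'pos x hx).le
  have gmono : MonotoneOn g (Set.Ici (0:ℝ)) := by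
    intro x hx y hy hxy
    rcases (show (0:ℝ) ≤ x from hx).eq_or_lt with h | h
    · rw [← h, hg0]; exact hgnn y hy
    · exact gmonoI h (lt_of_lt_of_le h hxy) hxy
  -- integrability
  have hgint : ∀ t : ℝ, 0 ≤ t → IntervalIntegrable g volume 0 t := by
    intro t ht
    apply MonotoneOn.intervalIntegrable
    intro x hx y hy hxy
    rw [Set.uIcc_of_le ht] at hx hy
    exact gmono hx.1 hy.1 hxy
  -- derivative of G
  have hGd : ∀ t, 0 < t → HasDerivAt G (g t) t := by
    intro t ht
    have : G = fun u => ∫ τ in (0:ℝ)..u, g τ := funext hG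
    rw [this]
    exact intervalIntegral.integral_hasDerivAt_right (hgint t ht.le)
      (hgc.stronglyMeasurableAtFilter isOpen_Ioi t ht)
      (hgd t ht).continuousAt
  -- positivity of G
  have hGpos : ∀ t, 0 < t → 0 < G t := by
    intro t ht
    rw [hG t]
    apply intervalIntegral.intervalIntegral_pos_of_pos_on (hgint t ht.le) _ ht
    intro x hx
    exact hg x hx.1
  have hGnn : ∀ t, 0 ≤ t → 0 ≤ G t := by
    intro t ht
    rcases ht.eq_or_lt with h | h
    · rw [← h, hG 0, intervalIntegral.integral_same]
    · exact (hGpos t h).le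
  -- G monotone
  have Gmono : MonotoneOn G (Set.Ici (0:ℝ)) := by
    intro x hx y hy hxy
    simp only [Set.mem_Ici] at hx hy
    rw [hG x, hG y]
    have hsub := intervalIntegral.integral_interval_sub_left (hgint y hy) (hgint x hx)
    have hnn : 0 ≤ ∫ τ in x..y, g τ := by
      apply intervalIntegral.integral_nonneg hxy
      intro u hu
      exact hgnn u (le_trans hx hu.1)
    linarith
  refine ⟨hGd, hGpos, Gmono, ?_⟩
  -- small integral bound : G s ≤ s * g t for 0 ≤ s ≤ t
  have hGsmall : ∀ s t : ℝ, 0 ≤ s → s ≤ t → G s ≤ s * g t := by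
    intro s t hs hst
    rw [hG s]
    calc (∫ τ in (0:ℝ)..s, g τ) ≤ ∫ _ in (0:ℝ)..s, g t := by
          apply intervalIntegral.integral_mono_on hs (hgint s hs) intervalIntegrable_const
          intro x hx
          exact gmono hx.1 (le_trans hs hst) (le_trans hx.2 hst)
      _ = s * g t := by simp
  intro τ hτ
  -- monotone auxiliary functions
  have key : ∀ C : ℝ, 0 ≤ C → (∀ x, 0 < x → 0 ≤ x * g' x - C * g x) →
      ∀ t, 0 < t → (1 + C) * G t ≤ t * g t := by
    intro C hC hd t ht
    set H : ℝ → ℝ := fun x => x * g x - (1 + C) * G x with hHdef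
    have hHd : ∀ x, 0 < x → HasDerivAt H (1 * g x + x * g' x - (1 + C) * g x) x := by
      intro x hx
      exact ((hasDerivAt_id x).mul (hgd x hx)).sub ((hGd x hx).const_mul (1 + C))
    have hHmono : MonotoneOn H (Set.Ioi (0:ℝ)) := by
      apply monotoneOn_of_deriv_nonneg (convex_Ioi 0)
      · intro x hx; exact (hHd x hx).continuousAt.continuousWithinAt
      · intro x hx
        rw [interior_Ioi] at hx
        exact (hHd x hx).differentiableAt.differentiableWithinAt
      · intro x hx
        rw [interior_Ioi] at hx
        rw [(hHd x hx).deriv]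
        have := hd x hx
        nlinarith [hg x hx]
    have h0 : 0 ≤ H t := by
      apply le_of_forall_pos_le_add
      intro ε hε
      set s : ℝ := min (t/2) (ε / ((1 + C) * g t + 1)) with hsdef
      have hgt : 0 < g t := hg t ht
      have hD : 0 < (1 + C) * g t + 1 := by nlinarith
      have hs0 : 0 < s := lt_min (by linarith) (div_pos hε hD)
      have hst : s ≤ t := le_trans (min_le_left _ _) (by linarith)
      have hsε : s * ((1 + C) * g t + 1) ≤ ε := by
        rw [← le_div_iff₀ hD]
        exact min_le_right _ _
      have hHs : H s ≤ H t := hHmono hs0 ht (hst)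
      have hGs : G s ≤ s * g t := hGsmall s t hs0.le hst
      have hgs : 0 ≤ s * g s := mul_nonneg hs0.le (hg s hs0).le
      have : -((1 + C) * (s * g t)) ≤ H s := by
        simp only [hHdef]
        nlinarith
      nlinarith
    simp only [hHdef] at h0
    linarith
  constructor
  · have := key ig (by linarith) (fun x hx => by
      have h1 := hgl x hx
      have := (le_div_iff₀ (hg x hx)).mp h1
      linarith) τ hτ
    linarith
  · -- upper: (1+sg) G t - t g t ≥ 0 via antitone-free argument
    set K : ℝ → ℝ := fun x => (1 + sg) * G x - x * g x with hKdef
    have hKd : ∀ x, 0 < x → HasDerivAt K ((1 + sg) * g x - (1 * g x + x * g' x)) x := by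
      intro x hx
      exact ((hGd x hx).const_mul (1 + sg)).sub ((hasDerivAt_id x).mul (hgd x hx))
    have hKmono : MonotoneOn K (Set.Ioi (0:ℝ)) := by
      apply monotoneOn_of_deriv_nonneg (convex_Ioi 0)
      · intro x hx; exact (hKd x hx).continuousAt.continuousWithinAt
      · intro x hx
        rw [interior_Ioi] at hx
        exact (hKd x hx).differentiableAt.differentiableWithinAt
      · intro x hx
        rw [interior_Ioi] at hx
        rw [(hKd x hx).deriv]
        have h1 := hgu x hx
        have := (div_le_iff₀ (hg x hx)).mp h1
        nlinarith
    have h0 : 0 ≤ K τ := by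
      apply le_of_forall_pos_le_add
      intro ε hε
      set s : ℝ := min (τ/2) (ε / (g τ + 1)) with hsdef
      have hgt : 0 < g τ := hg τ hτ
      have hD : 0 < g τ + 1 := by linarith
      have hs0 : 0 < s := lt_min (by linarith) (div_pos hε hD)
      have hst : s ≤ τ := le_trans (min_le_left _ _) (by linarith)
      have hsε : s * (g τ + 1) ≤ ε := by
        rw [← le_div_iff₀ hD]
        exact min_le_right _ _
      have hKs : K s ≤ K τ := hKmono hs0 hτ hst
      have hGs : 0 ≤ G s := hGnn s hs0.le
      have hgs : g s ≤ g τ := gmono hs0.le hτ.le hst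
      have hgs0 : 0 ≤ g s := hgnn s hs0.le
      have : -(s * g τ) ≤ K s := by
        simp only [hKdef]
        nlinarith
      nlinarith
    simp only [hKdef] at h0
    linarith

/-- With `S(t) := G(t) [G(t)/t]^{−1/n}` and `E(t) := S(tⁿ)`, the function
`E` is differentiable on `(0,∞)` with `2n − 1 ≤ t E′(t)/E(t) ≤ (n−1)(s_g+1) + 1`;
in particular `∫₀ᵗ E(s)/s ds ≃ E(t)` up to constants depending only on `n` and `s_g`. -/
theorem stmt10
    (n : ℕ) (hn : 2 ≤ n) (ig sg : ℝ) (hig : 1 ≤ ig) (higsg : ig ≤ sg) :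
    ∃ c₁ c₂ : ℝ, 0 < c₁ ∧ 0 < c₂ ∧
      ∀ (g g' : ℝ → ℝ),
        (∀ t, 0 < t → 0 < g t) → g 0 = 0 →
        (∀ t, 0 < t → HasDerivAt g (g' t) t) →
        ContinuousOn g' (Set.Ioi (0:ℝ)) →
        (∀ t, 0 < t → ig ≤ t * g' t / g t) →
        (∀ t, 0 < t → t * g' t / g t ≤ sg) →
      ∀ (G : ℝ → ℝ), (∀ t, G t = ∫ τ in (0:ℝ)..t, g τ) →
      ∀ (S E : ℝ → ℝ),
        (∀ t, 0 < t → S t = G t * (G t / t) ^ (-(1:ℝ) / n)) →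
        (∀ t, E t = S (t ^ (n : ℕ))) →
        (∀ t : ℝ, 0 < t → ∃ E' : ℝ,
          HasDerivAt E E' t ∧
          (2 * (n : ℝ) - 1) * E t ≤ t * E' ∧
          t * E' ≤ (((n : ℝ) - 1) * (sg + 1) + 1) * E t) ∧
        (∀ t : ℝ, 0 < t →
          c₁ * E t ≤ ∫ s in (0:ℝ)..t, E s / s ∧
          (∫ s in (0:ℝ)..t, E s / s) ≤ c₂ * E t) := by
  have hn2 : (2:ℝ) ≤ (n:ℝ) := by exact_mod_cast hn
  have hn0 : (n:ℝ) ≠ 0 := by positivity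
  set a : ℝ := 2 * (n:ℝ) - 1 with hadef
  set b : ℝ := ((n:ℝ) - 1) * (sg + 1) + 1 with hbdef
  have ha0 : 0 < a := by simp only [hadef]; linarith
  have hb0 : 0 < b := by simp only [hbdef]; nlinarith
  have hab : a ≤ b := by simp only [hadef, hbdef]; nlinarith
  refine ⟨b⁻¹, a⁻¹, by positivity, by positivity, ?_⟩
  intro g g' hg hg0 hgd hg'c hgl hgu G hG S E hS hE
  obtain ⟨hGd, hGpos, Gmono, hkey⟩ :=
    aux_key ig sg hig higsg g g' hg hg0 hgd hgl hgu G hG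
  have hGnn : ∀ t, 0 ≤ t → 0 ≤ G t := by
    intro t ht
    rcases ht.eq_or_lt with h | h
    · rw [← h, hG 0, intervalIntegral.integral_same]
    · exact (hGpos t h).le
  set p : ℝ := ((n:ℝ) - 1) / (n:ℝ) with hpdef
  have hp0 : 0 < p := by
    rw [hpdef]; exact div_pos (by linarith) (by linarith)
  have hp1 : p < 1 := by
    rw [hpdef, div_lt_one (by linarith)]; linarith
  -- E s = G(s^n)^p * s  for s > 0
  have hEeq : ∀ s : ℝ, 0 < s → E s = G (s ^ n) ^ p * s := by
    intro s hs
    have hB : (0:ℝ) < s ^ n := pow_pos hs n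
    have hA : 0 < G (s ^ n) := hGpos _ hB
    rw [hE s, hS _ hB]
    rw [Real.div_rpow hA.le hB.le]
    have e2 : ((s:ℝ) ^ n) ^ (-(1:ℝ)/(n:ℝ)) = s ^ (-(1:ℝ)) := by
      rw [← Real.rpow_natCast s n, ← Real.rpow_mul hs.le]
      congr 1
      field_simp
    rw [e2, Real.rpow_neg_one, div_eq_mul_inv, inv_inv]
    rw [← mul_assoc]
    congr 1
    nth_rewrite 1 [← Real.rpow_one (G (s ^ n))]
    rw [← Real.rpow_add hA]
    congr 1
    rw [hpdef]
    field_simp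
    ring
  have hEpos : ∀ t : ℝ, 0 < t → 0 < E t := by
    intro t ht
    rw [hEeq t ht]
    exact mul_pos (Real.rpow_pos_of_pos (hGpos _ (pow_pos ht n)) p) ht
  -- the derivative
  set e' : ℝ → ℝ := fun t =>
    g (t ^ n) * ((n:ℝ) * t ^ (n - 1)) * p * G (t ^ n) ^ (p - 1) * t + G (t ^ n) ^ p * 1
    with he'def
  have hEd : ∀ t : ℝ, 0 < t → HasDerivAt E (e' t) t := by
    intro t ht
    have hB : (0:ℝ) < t ^ n := pow_pos ht n
    have hA : 0 < G (t ^ n) := hGpos _ hB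
    have hu : HasDerivAt (fun x : ℝ => G (x ^ n)) (g (t ^ n) * ((n:ℝ) * t ^ (n - 1))) t :=
      (hGd (t ^ n) hB).comp t (hasDerivAt_pow n t)
    have hu2 := hu.rpow_const (p := p) (Or.inl hA.ne')
    have hprod := hu2.mul (hasDerivAt_id t)
    apply hprod.congr_of_eventuallyEq
    filter_upwards [Ioi_mem_nhds ht] with x hx
    exact hEeq x hx
  -- ratio identity
  have hratio : ∀ t : ℝ, 0 < t →
      t * e' t = (1 + ((n:ℝ) - 1) * (t ^ n * g (t ^ n) / G (t ^ n))) * E t := by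
    intro t ht
    have hB : (0:ℝ) < t ^ n := pow_pos ht n
    have hA : 0 < G (t ^ n) := hGpos _ hB
    have hApow : G (t ^ n) ^ p = G (t ^ n) ^ (p - 1) * G (t ^ n) := by
      rw [← Real.rpow_add_one hA.ne' (p - 1), sub_add_cancel]
    have hpow : t ^ n = t ^ (n - 1) * t := by
      rw [← pow_succ]
      congr 1
      omega
    rw [hEeq t ht, he'def]
    simp only
    set A := G (t ^ n) with hAdef
    set w := g (t ^ n) with hwdef
    rw [hApow]
    set X := A ^ (p - 1) with hXdef
    rw [hpdef, hpow]
    field_simp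
    ring
  -- bound on the ratio
  have hR : ∀ t : ℝ, 0 < t →
      a * E t ≤ t * e' t ∧ t * e' t ≤ b * E t := by
    intro t ht
    have hB : (0:ℝ) < t ^ n := pow_pos ht n
    have hA : 0 < G (t ^ n) := hGpos _ hB
    obtain ⟨hk1, hk2⟩ := hkey (t ^ n) hB
    have hr1 : 1 + ig ≤ t ^ n * g (t ^ n) / G (t ^ n) := by
      rw [le_div_iff₀ hA]; linarith
    have hr2 : t ^ n * g (t ^ n) / G (t ^ n) ≤ 1 + sg := by
      rw [div_le_iff₀ hA]; linarith
    have hErat := hratio t ht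
    have hEp := (hEpos t ht).le
    set r := t ^ n * g (t ^ n) / G (t ^ n) with hrdef
    have h2r : 2 ≤ r := by linarith
    have hrs : r ≤ 1 + sg := hr2
    constructor
    · rw [hErat, hadef]
      have hcoef : 2 * (n:ℝ) - 1 ≤ 1 + ((n:ℝ) - 1) * r := by nlinarith
      exact mul_le_mul_of_nonneg_right hcoef hEp
    · rw [hErat, hbdef]
      have hcoef : 1 + ((n:ℝ) - 1) * r ≤ ((n:ℝ) - 1) * (sg + 1) + 1 := by nlinarith
      exact mul_le_mul_of_nonneg_right hcoef hEp
  constructor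
  · intro t ht
    exact ⟨e' t, hEd t ht, (hR t ht).1, (hR t ht).2⟩
  -- integral part
  intro t ht
  set h : ℝ → ℝ := fun s => G (s ^ n) ^ p with hhdef
  have hG0 : G 0 = 0 := by rw [hG 0, intervalIntegral.integral_same]
  have hh0 : h 0 = 0 := by
    simp only [hhdef]
    rw [zero_pow (by omega), hG0, Real.zero_rpow hp0.ne']
  have hhE : ∀ s : ℝ, 0 < s → h s = E s / s := by
    intro s hs
    rw [hEeq s hs, mul_div_assoc, div_self hs.ne', mul_one]
  -- the integral equals the integral of h
  have hint_eq : (∫ s in (0:ℝ)..t, E s / s) = ∫ s in (0:ℝ)..t, h s := by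
    apply intervalIntegral.integral_congr
    intro s hs
    rw [Set.uIcc_of_le ht.le] at hs
    show E s / s = h s
    rcases hs.1.eq_or_lt with hs0 | hs0
    · rw [← hs0, div_zero, hh0]
    · rw [hhE s hs0]
  -- h is monotone hence integrable
  have hhmono : MonotoneOn h (Set.Ici (0:ℝ)) := by
    intro x hx y hy hxy
    simp only [Set.mem_Ici] at hx hy
    apply Real.rpow_le_rpow (hGnn _ (by positivity))
      (Gmono (by positivity : (0:ℝ) ≤ x ^ n) (by positivity : (0:ℝ) ≤ y ^ n)
        (pow_le_pow_left₀ hx hxy n)) hp0.le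
  have hhint : IntervalIntegrable h volume 0 t := by
    apply MonotoneOn.intervalIntegrable
    intro x hx y hy hxy
    rw [Set.uIcc_of_le ht.le] at hx hy
    exact hhmono hx.1 hy.1 hxy
  -- monotonicity of E x * x^(-c) for c ≤ lower ratio bound, antitone for c ≥ upper
  have hmono_pow : ∀ c : ℝ, (∀ x : ℝ, 0 < x → c * E x ≤ x * e' x) →
      MonotoneOn (fun x => E x * x ^ (-c)) (Set.Ioi (0:ℝ)) := by
    intro c hc
    have hd : ∀ x : ℝ, 0 < x → HasDerivAt (fun x => E x * x ^ (-c))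
        (e' x * x ^ (-c) + E x * (-c * x ^ (-c - 1))) x := by
      intro x hx
      exact (hEd x hx).mul (Real.hasDerivAt_rpow_const (Or.inl hx.ne'))
    apply monotoneOn_of_deriv_nonneg (convex_Ioi 0)
    · intro x hx; exact (hd x hx).continuousAt.continuousWithinAt
    · intro x hx
      rw [interior_Ioi] at hx
      exact (hd x hx).differentiableAt.differentiableWithinAt
    · intro x hx
      rw [interior_Ioi] at hx
      rw [(hd x hx).deriv]
      have hY : (0:ℝ) < x ^ (-c - 1) := Real.rpow_pos_of_pos hx _
      have hxc : x ^ (-c) = x ^ (-c - 1) * x := by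
        rw [← Real.rpow_add_one hx.ne' (-c - 1), sub_add_cancel]
      rw [hxc]
      have := hc x hx
      nlinarith
  have hanti_pow : ∀ c : ℝ, (∀ x : ℝ, 0 < x → x * e' x ≤ c * E x) →
      AntitoneOn (fun x => E x * x ^ (-c)) (Set.Ioi (0:ℝ)) := by
    intro c hc
    have hd : ∀ x : ℝ, 0 < x → HasDerivAt (fun x => E x * x ^ (-c))
        (e' x * x ^ (-c) + E x * (-c * x ^ (-c - 1))) x := by
      intro x hx
      exact (hEd x hx).mul (Real.hasDerivAt_rpow_const (Or.inl hx.ne'))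
    apply antitoneOn_of_deriv_nonpos (convex_Ioi 0)
    · intro x hx; exact (hd x hx).continuousAt.continuousWithinAt
    · intro x hx
      rw [interior_Ioi] at hx
      exact (hd x hx).differentiableAt.differentiableWithinAt
    · intro x hx
      rw [interior_Ioi] at hx
      rw [(hd x hx).deriv]
      have hY : (0:ℝ) < x ^ (-c - 1) := Real.rpow_pos_of_pos hx _
      have hxc : x ^ (-c) = x ^ (-c - 1) * x := by
        rw [← Real.rpow_add_one hx.ne' (-c - 1), sub_add_cancel]
      rw [hxc]
      have := hc x hx
      nlinarith
  have hφ := hmono_pow a (fun x hx => (hR x hx).1)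
  have hψ := hanti_pow b (fun x hx => (hR x hx).2)
  -- pointwise bounds on h on [0,t]
  have hub : ∀ s ∈ Set.Icc (0:ℝ) t, h s ≤ E t * t ^ (-a) * s ^ (a - 1) := by
    intro s hs
    rcases hs.1.eq_or_lt with hs0 | hs0
    · rw [← hs0, hh0, Real.zero_rpow (by linarith : a - 1 ≠ 0), mul_zero]
    · have h1 : E s * s ^ (-a) ≤ E t * t ^ (-a) := hφ hs0 ht hs.2
      have hsa : (0:ℝ) < s ^ a := Real.rpow_pos_of_pos hs0 a
      have h2 : E s ≤ E t * t ^ (-a) * s ^ a := by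
        have := mul_le_mul_of_nonneg_right h1 hsa.le
        rwa [mul_assoc (E s), ← Real.rpow_add hs0, neg_add_cancel, Real.rpow_zero,
          mul_one] at this
      rw [hhE s hs0]
      calc E s / s ≤ E t * t ^ (-a) * s ^ a / s := by gcongr
        _ = E t * t ^ (-a) * s ^ (a - 1) := by
            rw [mul_div_assoc, ← Real.rpow_sub_one hs0.ne']
  have hlb : ∀ s ∈ Set.Icc (0:ℝ) t, E t * t ^ (-b) * s ^ (b - 1) ≤ h s := by
    intro s hs
    rcases hs.1.eq_or_lt with hs0 | hs0
    · rw [← hs0, hh0, Real.zero_rpow (by linarith : b - 1 ≠ 0), mul_zero]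
    · have h1 : E t * t ^ (-b) ≤ E s * s ^ (-b) := hψ hs0 ht hs.2
      have hsb : (0:ℝ) < s ^ b := Real.rpow_pos_of_pos hs0 b
      have h2 : E t * t ^ (-b) * s ^ b ≤ E s := by
        have := mul_le_mul_of_nonneg_right h1 hsb.le
        rwa [mul_assoc (E s), ← Real.rpow_add hs0, neg_add_cancel, Real.rpow_zero,
          mul_one] at this
      rw [hhE s hs0]
      calc E t * t ^ (-b) * s ^ (b - 1) = E t * t ^ (-b) * s ^ b / s := by
            rw [mul_div_assoc, ← Real.rpow_sub_one hs0.ne']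
        _ ≤ E s / s := by gcongr
  -- integrability of the power comparison functions
  have hpaint : IntervalIntegrable (fun s : ℝ => E t * t ^ (-a) * s ^ (a - 1)) volume 0 t :=
    (intervalIntegral.intervalIntegrable_rpow' (by linarith : (-1:ℝ) < a - 1)).const_mul _
  have hpbint : IntervalIntegrable (fun s : ℝ => E t * t ^ (-b) * s ^ (b - 1)) volume 0 t :=
    (intervalIntegral.intervalIntegrable_rpow' (by linarith : (-1:ℝ) < b - 1)).const_mul _
  -- values of those integrals
  have hval : ∀ c : ℝ, 0 < c →
      (∫ s in (0:ℝ)..t, E t * t ^ (-c) * s ^ (c - 1)) = c⁻¹ * E t := by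
    intro c hc
    rw [intervalIntegral.integral_const_mul, integral_rpow (Or.inl (by linarith : (-1:ℝ) < c - 1))]
    rw [sub_add_cancel, Real.zero_rpow hc.ne', sub_zero]
    have h2 : t ^ (-c) * t ^ c = 1 := by
      rw [← Real.rpow_add ht, neg_add_cancel, Real.rpow_zero]
    have h3 : E t * t ^ (-c) * (t ^ c / c) = t ^ (-c) * t ^ c * E t / c := by ring
    rw [h3, h2, one_mul, div_eq_inv_mul]
  constructor
  · rw [hint_eq, ← hval b hb0]
    exact intervalIntegral.integral_mono_on ht.le hpbint hhint hlb
  · rw [hint_eq, ← hval a ha0]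
    exact intervalIntegral.integral_mono_on ht.le hhint hpaint hub
end
end

section
/- Let n ≥ 2, let S(t) := G(t) [G(t)/t]^{−1/n} for t > 0, and F(t) := [S(t)]ⁿ, and let F* denote the Young conjugate F*(α) := sup_{σ>0} (ασ − F(σ)). Then for every α > 0 one has F*(α^{n−1}) ≤ [ S(G^{−1}(α)) ]ⁿ, where G^{−1} is the inverse of G. -/
/-!
Since `S(t)ⁿ = G(t)ⁿ · t / G(t) = G(t)ⁿ⁻¹ t`, we have `F(σ) = G(σ)ⁿ⁻¹ σ`, and the right-hand side is
`αⁿ⁻¹ t₀` where `t₀ > 0` solves `G(t₀) = α`. If `σ ≤ t₀`, then `αⁿ⁻¹ σ - F(σ) ≤ αⁿ⁻¹ σ ≤ αⁿ⁻¹ t₀`;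
if `σ > t₀`, then `G(σ) ≥ α` and the left-hand side is `≤ 0`.
The solution `t₀` exists because `i_g ≥ 1` makes `g` nondecreasing, so `G` is continuous on
`[0, ∞)` and grows at least linearly.
-/

open MeasureTheory Real Set intervalIntegral

lemma monotoneOn_Ici_of_hasDerivAt_nonneg {g g' : ℝ → ℝ} (h0 : ∀ t, 0 < t → g 0 ≤ g t)
    (hd : ∀ t, 0 < t → HasDerivAt g (g' t) t) (hd' : ∀ t, 0 < t → 0 ≤ g' t) :
    MonotoneOn g (Ici 0) := by
  have hIoi : MonotoneOn g (Ioi 0) :=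
    monotoneOn_of_deriv_nonneg (convex_Ioi 0)
      (fun t ht ↦ (hd t ht).continuousAt.continuousWithinAt)
      (fun t ht ↦ (hd t (interior_subset ht)).differentiableAt.differentiableWithinAt)
      (fun t ht ↦ (hd t (interior_subset ht)).deriv ▸ hd' t (interior_subset ht))
  intro x hx y hy hxy
  rcases (mem_Ici.mp hx).eq_or_lt with rfl | hx'
  · rcases (mem_Ici.mp hy).eq_or_lt with rfl | hy'
    · exact le_rfl
    · exact h0 y hy'
  · exact hIoi hx' (hx'.trans_le hxy) hxy

section PrimitiveOfMonotone

variable {g : ℝ → ℝ}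

lemma MonotoneOn.intervalIntegrable_of_Ici (hg : MonotoneOn g (Ici 0)) {a b : ℝ} (ha : 0 ≤ a)
    (hb : 0 ≤ b) : IntervalIntegrable g volume a b :=
  (hg.mono fun _ hx ↦ (le_min ha hb).trans hx.1).intervalIntegrable

lemma MonotoneOn.integral_mono_interval_of_Ici (hg : MonotoneOn g (Ici 0)) (h0 : 0 ≤ g 0)
    {a b c d : ℝ} (hc : 0 ≤ c) (hca : c ≤ a) (hab : a ≤ b) (hbd : b ≤ d) :
    ∫ τ in a..b, g τ ≤ ∫ τ in c..d, g τ :=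
  integral_mono_interval hca hab hbd
    ((ae_restrict_mem measurableSet_Ioc).mono fun _ hx ↦
      h0.trans (hg self_mem_Ici (mem_Ici.mpr (hc.trans hx.1.le)) (hc.trans hx.1.le)))
    (hg.intervalIntegrable_of_Ici hc (hc.trans (hca.trans (hab.trans hbd))))

lemma MonotoneOn.monotoneOn_primitive (hg : MonotoneOn g (Ici 0)) (h0 : 0 ≤ g 0) :
    MonotoneOn (fun t ↦ ∫ τ in (0 : ℝ)..t, g τ) (Ici 0) := fun _ ha _ _ hab ↦
  hg.integral_mono_interval_of_Ici h0 le_rfl le_rfl ha hab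

lemma MonotoneOn.sub_mul_le_integral (hg : MonotoneOn g (Ici 0)) {a b : ℝ} (ha : 0 ≤ a)
    (hab : a ≤ b) : (b - a) * g a ≤ ∫ τ in a..b, g τ := by
  have := integral_mono_on hab intervalIntegrable_const
    (hg.intervalIntegrable_of_Ici ha (ha.trans hab))
    fun x hx ↦ hg ha (mem_Ici.mpr (ha.trans hx.1)) hx.1
  simpa [intervalIntegral.integral_const, smul_eq_mul] using this

lemma MonotoneOn.exists_pos_primitive_eq (hg : MonotoneOn g (Ici 0)) (h0 : 0 ≤ g 0)
    (h1 : 0 < g 1) {α : ℝ} (hα : 0 < α) : ∃ t, 0 < t ∧ ∫ τ in (0 : ℝ)..t, g τ = α := by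
  set T := 1 + α / g 1
  have hT : 1 ≤ T := le_add_of_nonneg_right (div_pos hα h1).le
  have hαT : α ≤ ∫ τ in (0 : ℝ)..T, g τ := calc
    α = (T - 1) * g 1 := by rw [add_sub_cancel_left, div_mul_cancel₀ _ h1.ne']
    _ ≤ ∫ τ in (1 : ℝ)..T, g τ := hg.sub_mul_le_integral zero_le_one hT
    _ ≤ ∫ τ in (0 : ℝ)..T, g τ := hg.integral_mono_interval_of_Ici h0 le_rfl zero_le_one hT le_rfl
  have hcont : ContinuousOn (fun t ↦ ∫ τ in (0 : ℝ)..t, g τ) (Icc 0 T) := by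
    simpa [uIcc_of_le (zero_le_one.trans hT)] using
      continuousOn_primitive_interval' (hg.intervalIntegrable_of_Ici le_rfl (zero_le_one.trans hT))
        left_mem_uIcc
  obtain ⟨t, ht, hGt⟩ := intermediate_value_Icc (zero_le_one.trans hT) hcont
    ⟨by simpa using hα.le, hαT⟩
  refine ⟨t, ht.1.lt_of_ne ?_, hGt⟩
  rintro rfl
  simp [hα.ne] at hGt

end PrimitiveOfMonotone

lemma mul_div_rpow_neg_inv_pow {a t : ℝ} (ha : 0 < a) (ht : 0 < t) {n : ℕ} (hn : n ≠ 0) :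
    (a * (a / t) ^ (-(1 : ℝ) / n)) ^ n = a ^ (n - 1) * t := by
  rw [mul_pow, ← rpow_natCast ((a / t) ^ _), ← rpow_mul (div_pos ha ht).le,
    div_mul_cancel₀ _ (Nat.cast_ne_zero.mpr hn), rpow_neg_one, inv_div,
    ← pow_sub_one_mul hn]
  field_simp

lemma MonotoneOn.pow_mul_sub_pow_mul_le {Φ : ℝ → ℝ} (hΦ : MonotoneOn Φ (Ici 0)) (hΦ0 : 0 ≤ Φ 0)
    (k : ℕ) {s σ : ℝ} (hs : 0 ≤ s) (hσ : 0 ≤ σ) : Φ s ^ k * σ - Φ σ ^ k * σ ≤ Φ s ^ k * s := by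
  have hΦnonneg : ∀ t, 0 ≤ t → 0 ≤ Φ t := fun t ht ↦ hΦ0.trans (hΦ self_mem_Ici ht ht)
  have hΦs := pow_nonneg (hΦnonneg s hs) k
  rcases le_total σ s with hσs | hsσ
  · nlinarith [pow_nonneg (hΦnonneg σ hσ) k]
  · nlinarith [pow_le_pow_left₀ (hΦnonneg s hs) (hΦ hs hσ hsσ) k]

theorem stmt11_general
    (n : ℕ) (hn : 2 ≤ n)
    (g g' : ℝ → ℝ) (ig : ℝ)
    (hgpos : ∀ t, 0 < t → 0 < g t) (hg0 : g 0 = 0)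
    (hgdiff : ∀ t, 0 < t → HasDerivAt g (g' t) t)
    (hig : 1 ≤ ig)
    (hlow : ∀ t, 0 < t → ig ≤ t * g' t / g t)
    (G : ℝ → ℝ) (hG : ∀ t, G t = ∫ τ in (0:ℝ)..t, g τ)
    (Ginv : ℝ → ℝ)
    (hGinv₁ : ∀ t, 0 ≤ t → Ginv (G t) = t)
    (S F : ℝ → ℝ)
    (hS : ∀ t, 0 < t → S t = G t * (G t / t) ^ (-(1:ℝ) / n))
    (hF : ∀ t, 0 < t → F t = S t ^ (n : ℕ)) :
    ∀ α : ℝ, 0 < α → ∀ σ : ℝ, 0 < σ →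
      α ^ ((n : ℝ) - 1) * σ - F σ ≤ S (Ginv α) ^ (n : ℕ) := by
  intro α hα σ hσ
  have hg'nonneg : ∀ t, 0 < t → 0 ≤ g' t := fun t ht ↦ by
    have := (zero_le_one.trans hig).trans (hlow t ht)
    rwa [le_div_iff₀ (hgpos t ht), zero_mul, mul_nonneg_iff_of_pos_left ht] at this
  have hmono : MonotoneOn g (Ici 0) := monotoneOn_Ici_of_hasDerivAt_nonneg
    (fun t ht ↦ by rw [hg0]; exact (hgpos t ht).le) hgdiff hg'nonneg
  have hGmono : MonotoneOn G (Ici 0) := funext hG ▸ hmono.monotoneOn_primitive hg0.ge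
  have hGpos : ∀ t, 0 < t → 0 < G t := fun t ht ↦ hG t ▸
    intervalIntegral_pos_of_pos_on (hmono.intervalIntegrable_of_Ici le_rfl ht.le)
      (fun x hx ↦ hgpos x hx.1) ht
  obtain ⟨t₀, ht₀, hGt₀⟩ := hmono.exists_pos_primitive_eq hg0.ge (hgpos 1 one_pos) hα
  rw [← hG] at hGt₀
  have hGinv : Ginv α = t₀ := hGt₀ ▸ hGinv₁ t₀ ht₀.le
  subst hGt₀
  have hn0 : n ≠ 0 := by omega
  rw [hF σ hσ, hS σ hσ, hGinv, hS t₀ ht₀, mul_div_rpow_neg_inv_pow (hGpos σ hσ) hσ hn0,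
    mul_div_rpow_neg_inv_pow (hGpos t₀ ht₀) ht₀ hn0, ← Nat.cast_pred (by omega), rpow_natCast]
  exact hGmono.pow_mul_sub_pow_mul_le (hG 0 ▸ integral_same.ge) (n - 1) ht₀.le hσ.le

/-- With `S(t) := G(t)[G(t)/t]^{−1/n}` and `F(t) := S(t)ⁿ`, the Young
conjugate `F*(α) := sup_{σ>0} (ασ − F(σ))` satisfies `F*(α^{n−1}) ≤ [S(G^{−1}(α))]ⁿ` for
every `α > 0`; formulated without `sSup`, `α^{n−1}σ − F(σ) ≤ [S(G^{−1}(α))]ⁿ` for all `σ > 0`. -/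
theorem stmt11
    (n : ℕ) (hn : 2 ≤ n)
    (g g' : ℝ → ℝ) (ig sg : ℝ)
    (hgpos : ∀ t, 0 < t → 0 < g t) (hg0 : g 0 = 0)
    (hgdiff : ∀ t, 0 < t → HasDerivAt g (g' t) t)
    (hg'cont : ContinuousOn g' (Set.Ioi (0:ℝ)))
    (hig : 1 ≤ ig) (higsg : ig ≤ sg)
    (hlow : ∀ t, 0 < t → ig ≤ t * g' t / g t)
    (hupp : ∀ t, 0 < t → t * g' t / g t ≤ sg)
    (G : ℝ → ℝ) (hG : ∀ t, G t = ∫ τ in (0:ℝ)..t, g τ)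
    (Ginv : ℝ → ℝ)
    (hGinv₁ : ∀ t, 0 ≤ t → Ginv (G t) = t) (hGinv₂ : ∀ s, 0 ≤ s → G (Ginv s) = s)
    (S F : ℝ → ℝ)
    (hS : ∀ t, 0 < t → S t = G t * (G t / t) ^ (-(1:ℝ) / n))
    (hF : ∀ t, 0 < t → F t = S t ^ (n : ℕ)) :
    ∀ α : ℝ, 0 < α → ∀ σ : ℝ, 0 < σ →
      α ^ ((n : ℝ) - 1) * σ - F σ ≤ S (Ginv α) ^ (n : ℕ) :=
  stmt11_general n hn g g' ig hgpos hg0 hgdiff hig hlow G hG Ginv hGinv₁ S F hS hF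
end
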